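/- Let α > 0. For every Young diagram λ, ∑_{Λ : λ ↗ Λ} κ_α(λ,Λ) · φ(Λ) = φ(λ), where the sum runs over all Young diagrams Λ obtained from λ by adding one box. Hence the numbers p_α(λ,Λ) = κ_α(λ,Λ) φ(Λ)/φ(λ) are nonnegative and sum to 1 over Λ with λ ↗ Λ, i.e. they form a system of transition probabilities on the Young lattice. -/

import Mathlib

/-- `ν` is obtained from `μ` by adding a single box (`μ ↗ ν`). -/
def YDCovers (μ ν : YoungDiagram) : Prop :=
  ∃ c ∉ μ.cells, ν.cells = insert c μ.cells

/-- The arm length `a(b) = λᵢ − j` of a box `b = (i,j)` (0-indexed). -/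
def armLen (μ : YoungDiagram) (b : ℕ × ℕ) : ℕ := μ.rowLen b.1 - b.2 - 1

/-- The leg length `l(b) = λ′ⱼ − i` of a box `b = (i,j)` (0-indexed). -/
def legLen (μ : YoungDiagram) (b : ℕ × ℕ) : ℕ := μ.colLen b.2 - b.1 - 1

/-- The Pieri multiplicity `κ_α(μ,ν)` for Jack symmetric functions, for `μ ↗ ν`. -/
noncomputable def jackMult (α : ℝ) (μ ν : YoungDiagram) : ℝ :=
  ∏ b0 ∈ ν.cells \ μ.cells, ∏ b ∈ μ.cells.filter (fun c => c.2 = b0.2),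
    (((armLen μ b : ℝ) * α + (legLen μ b : ℝ) + 2) *
        (((armLen μ b : ℝ) + 1) * α + (legLen μ b : ℝ))) /
      ((((armLen μ b : ℝ) + 1) * α + (legLen μ b : ℝ) + 1) *
        ((armLen μ b : ℝ) * α + (legLen μ b : ℝ) + 1))

/-- `φ(μ) = ∏_{b∈μ} (a(b)α + l(b) + 1)⁻¹`. -/
noncomputable def phiJack (α : ℝ) (μ : YoungDiagram) : ℝ :=
  ∏ b ∈ μ.cells, ((armLen μ b : ℝ) * α + (legLen μ b : ℝ) + 1)⁻¹

/-!
Write `z_i = λ_i α - i` for the α-content of the cell just right of row `i`, and `ℓ` for the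
number of rows. Adding a box at the end of row `r` changes hook weights only in row `r` and in
column `λ_r`, so `κ_α(λ,Λ) φ(Λ) / φ(λ)` is a product over those cells. In terms of contents, and
with the columns of row `r` grouped by height, this product telescopes to
`p_r = ∏_{i<ℓ} (z_r - z_i + 1) / ∏_{i≤ℓ, i≠r} (z_r - z_i)`. For a row `r ≤ ℓ` that is not
addable this expression vanishes (its factor `i = r - 1` is zero), so summing over addable rows
is summing over all `r ≤ ℓ`. These `p_r` are the residues of the rational function
`∏_{i<ℓ} (u - z_i + 1) / ∏_{i≤ℓ} (u - z_i)`, a ratio of monic polynomials of degrees `ℓ` and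
`ℓ + 1`, so they sum to `1`: by Lagrange interpolation, their sum is the leading coefficient of
the numerator.
-/

open Finset

theorem sum_prod_sub_div_prod_erase_sub_eq_one {ι κ F : Type*} [Field F] [DecidableEq ι]
    {s : Finset ι} {t : Finset κ} {v : ι → F} (w : κ → F) (hv : Set.InjOn v s)
    (hcard : #s = #t + 1) :
    ∑ i ∈ s, (∏ j ∈ t, (v i - w j)) / ∏ j ∈ s.erase i, (v i - v j) = 1 := by
  have hlead := Lagrange.leadingCoeff_eq_sum hv (P := Lagrange.nodal t w)
    (by rw [Lagrange.degree_nodal, hcard]; norm_cast)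
  simpa [Lagrange.nodal_monic.leadingCoeff, Lagrange.eval_nodal] using hlead.symm

theorem prod_Ico_div₀ {G₀ : Type*} [CommGroupWithZero G₀] {f : ℕ → G₀} {m n : ℕ} (hmn : m ≤ n)
    (hf : ∀ i ∈ Icc m n, f i ≠ 0) : ∏ i ∈ Ico m n, f (i + 1) / f i = f n / f m := by
  induction n, hmn using Nat.le_induction with
  | base => rw [Ico_self, prod_empty, div_self (hf m (by simp))]
  | succ n hmn ih =>
    rw [prod_Ico_succ_top hmn, ih fun i hi => hf i (Icc_subset_Icc_right n.le_succ hi),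
      div_mul_div_cancel₀' (hf n (by simp [hmn]))]

namespace YoungDiagram

variable {α : ℝ} {μ : YoungDiagram} {r : ℕ}

def IsAddableRow (μ : YoungDiagram) (r : ℕ) : Prop := ∀ i < r, μ.rowLen r < μ.rowLen i

instance (μ : YoungDiagram) : DecidablePred μ.IsAddableRow :=
  fun _ => inferInstanceAs (Decidable (∀ i < _, _))

theorem rowLen_eq_of_forall_mem_iff {i n : ℕ} (h : ∀ j, (i, j) ∈ μ ↔ j < n) : μ.rowLen i = n :=
  eq_of_forall_lt_iff fun j => mem_iff_lt_rowLen.symm.trans (h j)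

theorem colLen_eq_of_forall_mem_iff {j n : ℕ} (h : ∀ i, (i, j) ∈ μ ↔ i < n) : μ.colLen j = n :=
  eq_of_forall_lt_iff fun i => mem_iff_lt_colLen.symm.trans (h i)

theorem rowEnd_notMem (μ : YoungDiagram) (r : ℕ) : (r, μ.rowLen r) ∉ μ := by
  simp [mem_iff_lt_rowLen]

theorem rowLen_colLen_zero (μ : YoungDiagram) : μ.rowLen (μ.colLen 0) = 0 :=
  Nat.eq_zero_of_not_pos fun hpos =>
    lt_irrefl _ (mem_iff_lt_colLen.mp (mem_iff_lt_rowLen.mpr hpos))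

theorem IsAddableRow.colLen_rowLen (h : μ.IsAddableRow r) : μ.colLen (μ.rowLen r) = r := by
  refine colLen_eq_of_forall_mem_iff fun i => ?_
  rw [mem_iff_lt_rowLen]
  refine ⟨fun hi => ?_, h i⟩
  by_contra! hri
  exact (μ.rowLen_anti r i hri).not_gt hi

theorem IsAddableRow.le_colLen_zero (h : μ.IsAddableRow r) : r ≤ μ.colLen 0 := by
  by_contra! hr
  simpa [rowLen_colLen_zero] using h _ hr

theorem isLowerSet_insert_rowEnd (h : μ.IsAddableRow r) :
    IsLowerSet (↑(insert (r, μ.rowLen r) μ.cells) : Set (ℕ × ℕ)) := by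
  rw [Finset.coe_insert]
  rintro ⟨i, j⟩ ⟨i', j'⟩ hle hmem
  obtain ⟨hi, hj⟩ := Prod.mk_le_mk.mp hle
  simp only [Set.mem_insert_iff, Prod.mk.injEq, Finset.mem_coe, mem_cells,
    mem_iff_lt_rowLen] at hmem ⊢
  rcases hmem with ⟨rfl, rfl⟩ | hmem
  · rcases hi.lt_or_eq with hi | rfl
    · exact Or.inr (lt_of_le_of_lt hj (h i' hi))
    · rcases hj.lt_or_eq with hj | rfl
      · exact Or.inr hj
      · exact Or.inl ⟨rfl, rfl⟩
  · exact Or.inr (lt_of_le_of_lt hj (lt_of_lt_of_le hmem (μ.rowLen_anti _ _ hi)))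

/-- Junk value `μ` when row `r` is not addable. -/
def addBox (μ : YoungDiagram) (r : ℕ) : YoungDiagram :=
  if h : μ.IsAddableRow r then ⟨insert (r, μ.rowLen r) μ.cells, isLowerSet_insert_rowEnd h⟩
  else μ

theorem IsAddableRow.cells_addBox (h : μ.IsAddableRow r) :
    (μ.addBox r).cells = insert (r, μ.rowLen r) μ.cells := by
  rw [addBox, dif_pos h]

theorem IsAddableRow.mem_addBox (h : μ.IsAddableRow r) {b : ℕ × ℕ} :
    b ∈ μ.addBox r ↔ b = (r, μ.rowLen r) ∨ b ∈ μ := by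
  rw [← mem_cells, h.cells_addBox, Finset.mem_insert, mem_cells]

theorem IsAddableRow.rowLen_addBox (h : μ.IsAddableRow r) (i : ℕ) :
    (μ.addBox r).rowLen i = μ.rowLen i + if i = r then 1 else 0 := by
  refine rowLen_eq_of_forall_mem_iff fun j => ?_
  rw [h.mem_addBox, mem_iff_lt_rowLen, Prod.mk.injEq]
  split_ifs with hi <;> grind

theorem IsAddableRow.colLen_addBox (h : μ.IsAddableRow r) (j : ℕ) :
    (μ.addBox r).colLen j = μ.colLen j + if j = μ.rowLen r then 1 else 0 := by
  refine colLen_eq_of_forall_mem_iff fun i => ?_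
  rw [h.mem_addBox, mem_iff_lt_colLen, Prod.mk.injEq]
  split_ifs with hj
  · subst hj; rw [h.colLen_rowLen]; omega
  · simp [hj]

theorem yDCovers_iff {ν : YoungDiagram} :
    YDCovers μ ν ↔ ∃ r, μ.IsAddableRow r ∧ ν = μ.addBox r := by
  constructor
  · rintro ⟨⟨i, j⟩, hnew, hcells⟩
    have hν : ∀ b, b ∈ ν ↔ b = (i, j) ∨ b ∈ μ := fun b => by
      rw [← mem_cells, hcells, Finset.mem_insert, mem_cells]
    have hij : (i, j) ∈ ν := (hν _).2 (Or.inl rfl)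
    rw [mem_cells, mem_iff_lt_rowLen, not_lt] at hnew
    have hj : j = μ.rowLen i := by
      refine le_antisymm (not_lt.mp fun hlt => ?_) hnew
      rcases (hν _).1 (ν.up_left_mem le_rfl hlt.le hij) with h | h
      · simp only [Prod.mk.injEq] at h; omega
      · exact μ.rowEnd_notMem i h
    subst hj
    have hadd : μ.IsAddableRow i := fun k hk => by
      rcases (hν _).1 (ν.up_left_mem hk.le le_rfl hij) with h | h
      · simp only [Prod.mk.injEq] at h; omega
      · exact mem_iff_lt_rowLen.mp h
    exact ⟨i, hadd, YoungDiagram.ext (by rw [hcells, hadd.cells_addBox])⟩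
  · rintro ⟨r, h, rfl⟩
    exact ⟨(r, μ.rowLen r), μ.rowEnd_notMem r, h.cells_addBox⟩

def addableRows (μ : YoungDiagram) : Finset ℕ :=
  (range (μ.colLen 0 + 1)).filter μ.IsAddableRow

theorem mem_addableRows : r ∈ μ.addableRows ↔ μ.IsAddableRow r := by
  rw [addableRows, mem_filter, mem_range, and_iff_right_iff_imp]
  exact fun h => Nat.lt_succ_of_le h.le_colLen_zero

theorem injOn_addBox : Set.InjOn μ.addBox μ.addableRows := by
  intro r hr r' hr' heq
  have hmem : (r, μ.rowLen r) ∈ μ.addBox r' := by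
    rw [← heq, (mem_addableRows.mp hr).mem_addBox]; exact Or.inl rfl
  rcases (mem_addableRows.mp hr').mem_addBox.mp hmem with h | h
  · exact (Prod.mk.inj h).1
  · exact absurd h (μ.rowEnd_notMem r)

theorem finsum_yDCovers_eq_sum {M : Type*} [AddCommMonoid M] (f : YoungDiagram → M) :
    ∑ᶠ ν ∈ {ν | YDCovers μ ν}, f ν = ∑ r ∈ μ.addableRows, f (μ.addBox r) := by
  classical
  have hset : {ν | YDCovers μ ν} = ↑(μ.addableRows.image μ.addBox) := by
    ext ν
    simp [yDCovers_iff, mem_addableRows, eq_comm]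
  rw [hset, finsum_mem_coe_finset, sum_image injOn_addBox]

/-- `z_i`: the α-content `jα - i` of the cell `(i, j)` just right of row `i`. -/
noncomputable def rowContent (α : ℝ) (μ : YoungDiagram) (i : ℕ) : ℝ := μ.rowLen i * α - i

/-- `t_j`: the α-content of the cell just below column `j`. -/
noncomputable def colContent (α : ℝ) (μ : YoungDiagram) (j : ℕ) : ℝ := j * α - μ.colLen j

local notation "z" => rowContent α μ

local notation "t" => colContent α μ

noncomputable def hookWeight (α : ℝ) (μ : YoungDiagram) (b : ℕ × ℕ) : ℝ :=
  armLen μ b * α + legLen μ b + 1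

theorem phiJack_eq_prod_hookWeight (α : ℝ) (μ : YoungDiagram) :
    phiJack α μ = ∏ b ∈ μ.cells, (hookWeight α μ b)⁻¹ := rfl

theorem hookWeight_eq_of_mem {b : ℕ × ℕ} (hb : b ∈ μ) :
    hookWeight α μ b = z b.1 - t b.2 - α := by
  obtain ⟨i, j⟩ := b
  have ha : armLen μ (i, j) + j + 1 = μ.rowLen i := by
    have := mem_iff_lt_rowLen.mp hb; simp only [armLen]; omega
  have hl : legLen μ (i, j) + i + 1 = μ.colLen j := by
    have := mem_iff_lt_colLen.mp hb; simp only [legLen]; omega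
  simp only [hookWeight, rowContent, colContent, ← ha, ← hl]
  push_cast
  ring

theorem hookWeight_pos (hα : 0 ≤ α) (μ : YoungDiagram) (b : ℕ × ℕ) : 0 < hookWeight α μ b := by
  lift α to NNReal using hα
  unfold hookWeight
  positivity

theorem phiJack_pos (hα : 0 ≤ α) (μ : YoungDiagram) : 0 < phiJack α μ :=
  prod_pos fun b _ => inv_pos.mpr (hookWeight_pos hα μ b)

theorem jackMult_nonneg (hα : 0 ≤ α) (μ ν : YoungDiagram) : 0 ≤ jackMult α μ ν := by
  lift α to NNReal using hα
  unfold jackMult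
  positivity

theorem rowContent_strictAnti (hα : 0 ≤ α) (μ : YoungDiagram) : StrictAnti (rowContent α μ) := by
  intro i k hik
  have hlen : (μ.rowLen k : ℝ) ≤ μ.rowLen i := by exact_mod_cast μ.rowLen_anti i k hik.le
  have hik' : (i : ℝ) < k := by exact_mod_cast hik
  simp only [rowContent]
  nlinarith

theorem IsAddableRow.colContent_rowLen (h : μ.IsAddableRow r) : t (μ.rowLen r) = z r := by
  rw [colContent, rowContent, h.colLen_rowLen]

theorem IsAddableRow.rowContent_addBox (h : μ.IsAddableRow r) (i : ℕ) :
    rowContent α (μ.addBox r) i = z i + if i = r then α else 0 := by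
  simp only [rowContent, h.rowLen_addBox]
  split_ifs <;> push_cast <;> ring

theorem IsAddableRow.colContent_addBox (h : μ.IsAddableRow r) (j : ℕ) :
    colContent α (μ.addBox r) j = t j - if j = μ.rowLen r then 1 else 0 := by
  simp only [colContent, h.colLen_addBox]
  split_ifs <;> push_cast <;> ring

theorem IsAddableRow.hookWeight_addBox (h : μ.IsAddableRow r) {b : ℕ × ℕ} (hb : b ∈ μ) :
    hookWeight α (μ.addBox r) b =
      hookWeight α μ b + (if b.1 = r then α else 0) + if b.2 = μ.rowLen r then 1 else 0 := by
  rw [hookWeight_eq_of_mem (h.mem_addBox.mpr (Or.inr hb)), hookWeight_eq_of_mem hb,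
    h.rowContent_addBox, h.colContent_addBox]
  ring

theorem IsAddableRow.hookWeight_addBox_rowEnd (h : μ.IsAddableRow r) :
    hookWeight α (μ.addBox r) (r, μ.rowLen r) = 1 := by
  rw [hookWeight_eq_of_mem (h.mem_addBox.mpr (Or.inl rfl)), h.rowContent_addBox,
    h.colContent_addBox, h.colContent_rowLen]
  simp

theorem IsAddableRow.phiJack_addBox (hα : 0 ≤ α) (h : μ.IsAddableRow r) :
    phiJack α (μ.addBox r) = phiJack α μ *
      ((∏ j ∈ range (μ.rowLen r), (z r - t j - α) / (z r - t j)) *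
        ∏ i ∈ range r, (z i - z r - α) / (z i - z r - α + 1)) := by
  have hne (b : ℕ × ℕ) : hookWeight α μ b ≠ 0 := (hookWeight_pos hα μ b).ne'
  have hsplit (b) (hb : b ∈ μ.cells) : (hookWeight α (μ.addBox r) b)⁻¹ =
      (hookWeight α μ b)⁻¹ * (hookWeight α μ b / hookWeight α (μ.addBox r) b) := by
    rw [inv_mul_eq_div, div_div_cancel_left' (hne b)]
  rw [phiJack_eq_prod_hookWeight, h.cells_addBox, prod_insert (μ.rowEnd_notMem r),
    h.hookWeight_addBox_rowEnd, inv_one, one_mul, prod_congr rfl hsplit, prod_mul_distrib,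
    ← phiJack_eq_prod_hookWeight]
  congr 1
  have hdisj : Disjoint (μ.row r) (μ.col (μ.rowLen r)) := by
    rw [disjoint_left]
    intro b hrow hcol
    rw [mem_row_iff] at hrow
    rw [mem_col_iff] at hcol
    exact μ.rowEnd_notMem r ((Prod.ext hrow.2 hcol.2 : b = (r, μ.rowLen r)) ▸ hrow.1)
  have hsub : μ.row r ∪ μ.col (μ.rowLen r) ⊆ μ.cells :=
    union_subset (filter_subset _ _) (filter_subset _ _)
  rw [← prod_subset hsub, prod_union hdisj, row_eq_prod, col_eq_prod, h.colLen_rowLen,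
    prod_product, prod_singleton, prod_product_right, prod_singleton]
  · congr 1 <;> refine prod_congr rfl fun k hk => ?_ <;> rw [mem_range] at hk
    · have hmem : (r, k) ∈ μ := mem_iff_lt_rowLen.mpr hk
      rw [h.hookWeight_addBox hmem, if_pos rfl, if_neg hk.ne, add_zero,
        hookWeight_eq_of_mem hmem, sub_add_cancel]
    · have hmem : (k, μ.rowLen r) ∈ μ := by rwa [mem_iff_lt_colLen, h.colLen_rowLen]
      rw [h.hookWeight_addBox hmem, if_neg hk.ne, if_pos rfl, add_zero,
        hookWeight_eq_of_mem hmem, h.colContent_rowLen]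
  · intro b hb hnot
    simp only [mem_union, mem_row_iff, mem_col_iff, mem_cells, not_or, not_and] at hnot hb
    rw [h.hookWeight_addBox hb, if_neg (hnot.1 hb), if_neg (hnot.2 hb), add_zero, add_zero,
      div_self (hne b)]

theorem IsAddableRow.jackMult_addBox (h : μ.IsAddableRow r) :
    jackMult α μ (μ.addBox r) = ∏ i ∈ range r,
      (z i - z r - α + 1) * (z i - z r - 1) / ((z i - z r) * (z i - z r - α)) := by
  have hnew : (μ.addBox r).cells \ μ.cells = {(r, μ.rowLen r)} := by
    rw [h.cells_addBox, insert_sdiff_of_notMem _ (μ.rowEnd_notMem r), Finset.sdiff_self,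
      insert_empty_eq]
  rw [jackMult, hnew, prod_singleton]
  change ∏ b ∈ μ.col (μ.rowLen r), _ = _
  rw [col_eq_prod, h.colLen_rowLen, prod_product, prod_congr rfl fun i _ => prod_singleton _ _]
  refine prod_congr rfl fun i hi => ?_
  have hw := hookWeight_eq_of_mem (α := α) (b := (i, μ.rowLen r))
    (by rwa [mem_iff_lt_colLen, h.colLen_rowLen, ← mem_range])
  rw [h.colContent_rowLen, hookWeight] at hw
  rw [show z i - z r = armLen μ (i, μ.rowLen r) * α + legLen μ (i, μ.rowLen r) + 1 + α by
    linarith]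
  ring_nf

theorem IsAddableRow.jackMult_mul_phiJack_addBox_eq_prod (hα : 0 ≤ α) (h : μ.IsAddableRow r) :
    jackMult α μ (μ.addBox r) * phiJack α (μ.addBox r) = phiJack α μ *
      ((∏ i ∈ range r, (z i - z r - 1) / (z i - z r)) *
        ∏ j ∈ range (μ.rowLen r), (z r - t j - α) / (z r - t j)) := by
  have hcol (i) (hi : i ∈ range r) :
      (z i - z r - α + 1) * (z i - z r - 1) / ((z i - z r) * (z i - z r - α)) *
        ((z i - z r - α) / (z i - z r - α + 1)) = (z i - z r - 1) / (z i - z r) := by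
    have hw := hookWeight_pos hα μ (i, μ.rowLen r)
    rw [hookWeight_eq_of_mem (by rwa [mem_iff_lt_colLen, h.colLen_rowLen, ← mem_range]),
      h.colContent_rowLen] at hw
    have : z i - z r ≠ 0 := by linarith
    field_simp
  rw [h.jackMult_addBox, h.phiJack_addBox hα, ← prod_congr rfl hcol, prod_mul_distrib]
  ring

theorem colLen_eq_of_mem_Ico {k j : ℕ} (hj : j ∈ Ico (μ.rowLen (k + 1)) (μ.rowLen k)) :
    μ.colLen j = k + 1 := by
  rw [mem_Ico] at hj
  refine le_antisymm (not_lt.mp fun hlt => ?_) (mem_iff_lt_colLen.mp (mem_iff_lt_rowLen.mpr hj.2))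
  exact hj.1.not_gt (mem_iff_lt_rowLen.mp (mem_iff_lt_colLen.mpr hlt))

theorem prod_Ico_rowLen_succ (hα : 0 ≤ α) {k : ℕ} (hrk : r ≤ k) :
    ∏ j ∈ Ico (μ.rowLen (k + 1)) (μ.rowLen k), (z r - t j - α) / (z r - t j) =
      (z r - z k + 1) / (z r - z (k + 1)) := by
  set g : ℕ → ℝ := fun j => z r + (k + 1) - j * α with hg
  have hfac (j) (hj : j ∈ Ico (μ.rowLen (k + 1)) (μ.rowLen k)) :
      (z r - t j - α) / (z r - t j) = g (j + 1) / g j := by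
    rw [colContent, colLen_eq_of_mem_Ico hj, hg]
    push_cast
    ring_nf
  have hpos (j) (hj : j ∈ Icc (μ.rowLen (k + 1)) (μ.rowLen k)) : g j ≠ 0 := by
    have hjr : (j : ℝ) ≤ μ.rowLen r := by
      exact_mod_cast (mem_Icc.mp hj).2.trans (μ.rowLen_anti r k hrk)
    have hrk' : (r : ℝ) ≤ k := by exact_mod_cast hrk
    have := mul_nonneg (sub_nonneg.mpr hjr) hα
    rw [hg, rowContent]
    nlinarith
  rw [prod_congr rfl hfac, prod_Ico_div₀ (μ.rowLen_anti k (k + 1) k.le_succ) hpos, hg]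
  simp only [rowContent]
  push_cast
  ring_nf

theorem prod_range_rowLen_eq (hα : 0 ≤ α) (hr : r ≤ μ.colLen 0) :
    ∏ j ∈ range (μ.rowLen r), (z r - t j - α) / (z r - t j) =
      ∏ i ∈ Ico r (μ.colLen 0), (z r - z i + 1) / (z r - z (i + 1)) := by
  suffices h : ∀ k, r ≤ k → ∏ j ∈ Ico (μ.rowLen k) (μ.rowLen r), (z r - t j - α) / (z r - t j) =
      ∏ i ∈ Ico r k, (z r - z i + 1) / (z r - z (i + 1)) by
    rw [← h _ hr, rowLen_colLen_zero, range_eq_Ico]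
  intro k hrk
  induction k, hrk using Nat.le_induction with
  | base => simp
  | succ k hrk ih =>
    rw [← prod_Ico_consecutive _ (μ.rowLen_anti k (k + 1) k.le_succ) (μ.rowLen_anti r k hrk),
      prod_Ico_succ_top hrk, ih, prod_Ico_rowLen_succ hα hrk, mul_comm]

/-- The residue at `u = z_r` of `∏_{i<ℓ} (u - z_i + 1) / ∏_{i≤ℓ} (u - z_i)`, where `ℓ = μ.colLen 0`
is the number of rows. -/
noncomputable def transitionWeight (α : ℝ) (μ : YoungDiagram) (r : ℕ) : ℝ :=
  (∏ i ∈ range (μ.colLen 0), (rowContent α μ r - (rowContent α μ i - 1))) /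
    ∏ i ∈ (range (μ.colLen 0 + 1)).erase r, (rowContent α μ r - rowContent α μ i)

theorem transitionWeight_eq_prod (hr : r ≤ μ.colLen 0) :
    transitionWeight α μ r = (∏ i ∈ range r, (z i - z r - 1) / (z i - z r)) *
      ∏ i ∈ Ico r (μ.colLen 0), (z r - z i + 1) / (z r - z (i + 1)) := by
  have herase : (range (μ.colLen 0 + 1)).erase r = range r ∪ Ico (r + 1) (μ.colLen 0 + 1) := by
    ext i
    simp only [mem_erase, mem_range, mem_union, mem_Ico]
    omega
  have hdisj : Disjoint (range r) (Ico (r + 1) (μ.colLen 0 + 1)) := by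
    rw [disjoint_left]
    intro i hi hi'
    simp only [mem_range, mem_Ico] at hi hi'
    omega
  have hflip (a b : ℝ) : (a - b - 1) / (a - b) = (b - (a - 1)) / (b - a) := by
    rw [← neg_div_neg_eq]
    congr 1 <;> ring
  rw [transitionWeight, herase, prod_union hdisj, ← prod_Ico_add', ← prod_range_mul_prod_Ico _ hr,
    prod_congr rfl fun i _ => hflip _ _, prod_div_distrib, prod_div_distrib, div_mul_div_comm]
  simp only [sub_sub_eq_add_sub, sub_add_eq_add_sub]

theorem transitionWeight_eq_zero (hr : r ≤ μ.colLen 0) (h : ¬ μ.IsAddableRow r) :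
    transitionWeight α μ r = 0 := by
  obtain ⟨i, hir, hi⟩ : ∃ i < r, μ.rowLen i ≤ μ.rowLen r := by
    simpa [IsAddableRow] using h
  have hlen : μ.rowLen (r - 1) = μ.rowLen r :=
    le_antisymm ((μ.rowLen_anti i (r - 1) (by omega)).trans hi) (μ.rowLen_anti _ _ (by omega))
  rw [transitionWeight, prod_eq_zero (i := r - 1) (mem_range.mpr (by omega)), zero_div]
  simp only [rowContent, hlen, Nat.cast_pred (by omega : 0 < r)]
  ring

theorem sum_transitionWeight (hα : 0 ≤ α) (μ : YoungDiagram) :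
    ∑ r ∈ μ.addableRows, transitionWeight α μ r = 1 := by
  rw [addableRows, sum_filter_of_ne fun r hr hne =>
    not_not.mp fun h => hne (transitionWeight_eq_zero (Nat.le_of_lt_succ (mem_range.mp hr)) h)]
  exact sum_prod_sub_div_prod_erase_sub_eq_one _ (rowContent_strictAnti hα μ).injective.injOn
    (by simp)

theorem IsAddableRow.jackMult_mul_phiJack_addBox (hα : 0 ≤ α) (h : μ.IsAddableRow r) :
    jackMult α μ (μ.addBox r) * phiJack α (μ.addBox r) = transitionWeight α μ r * phiJack α μ := by
  rw [h.jackMult_mul_phiJack_addBox_eq_prod hα, prod_range_rowLen_eq hα h.le_colLen_zero,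
    transitionWeight_eq_prod h.le_colLen_zero, mul_comm]

end YoungDiagram

open YoungDiagram

/-- For `α > 0` and every Young diagram `λ`:
`∑_{Λ : λ ↗ Λ} κ_α(λ,Λ) φ(Λ) = φ(λ)`; hence the numbers
`p_α(λ,Λ) = κ_α(λ,Λ) φ(Λ)/φ(λ)` are nonnegative and sum to `1` over `Λ` with `λ ↗ Λ`,
i.e. they form a system of transition probabilities on the Young lattice. -/
theorem jack_transition_probabilities (α : ℝ) (hα : 0 < α) (lam : YoungDiagram) :
    (∑ᶠ Λ ∈ {Λ : YoungDiagram | YDCovers lam Λ}, jackMult α lam Λ * phiJack α Λ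
        = phiJack α lam) ∧
    (∀ Λ : YoungDiagram, YDCovers lam Λ →
        0 ≤ jackMult α lam Λ * phiJack α Λ / phiJack α lam) ∧
    (∑ᶠ Λ ∈ {Λ : YoungDiagram | YDCovers lam Λ},
        jackMult α lam Λ * phiJack α Λ / phiJack α lam = 1) := by
  have hphi := phiJack_pos hα.le lam
  have hsum : ∑ᶠ Λ ∈ {Λ | YDCovers lam Λ}, jackMult α lam Λ * phiJack α Λ = phiJack α lam := by
    rw [finsum_yDCovers_eq_sum, sum_congr rfl fun r hr =>
      (mem_addableRows.mp hr).jackMult_mul_phiJack_addBox hα.le, ← sum_mul,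
      sum_transitionWeight hα.le, one_mul]
  refine ⟨hsum, fun Λ _ => ?_, ?_⟩
  · exact div_nonneg (mul_nonneg (jackMult_nonneg hα.le lam Λ) (phiJack_pos hα.le Λ).le) hphi.le
  · rw [finsum_yDCovers_eq_sum, ← sum_div,
      ← finsum_yDCovers_eq_sum fun Λ => jackMult α lam Λ * phiJack α Λ, hsum, div_self hphi.ne']
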